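/- arXiv:2508.06071 — 6 statements merged into one kernel-verified Lean document; each statement's English description precedes it below -/
import Mathlib

section
/- If φ is differentiable on (0,∞) with φ' > 0, then the hash supply function H(P) is differentiable on (0,∞) with H'(P) = (B+Φ)/(φ(H(P)) + H(P)·φ'(H(P))), and in particular H'(P) > 0 for all P > 0. -/
/-!
The free-entry condition says that `Hs` is a right inverse, on `(0, ∞)`, of
`g H = H φ(H) / (B + Φ)`, which is strictly increasing there. A right inverse of a strictly
increasing map is itself strictly increasing, and it hits a whole neighbourhood of each of its
values, hence it is continuous; the inverse function theorem in one variable then gives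
`Hs'(P) = 1 / g'(Hs P) = (B + Φ) / (φ(Hs P) + Hs P · φ'(Hs P))`, which is positive because
`φ > 0` and `φ' > 0` on `(0, ∞)`.
-/

open Set Filter Topology

section RightInverse

variable {α β : Type*} [LinearOrder α] [LinearOrder β] {g : α → β} {h : β → α}
  {s : Set α} {t : Set β}

theorem StrictMonoOn.strictMonoOn_of_rightInvOn (hg : StrictMonoOn g s) (hh : MapsTo h t s)
    (hinv : RightInvOn h g t) : StrictMonoOn h t := by
  intro y hy z hz hyz
  by_contra! hzy
  have := hg.monotoneOn (hh hz) (hh hy) hzy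
  rw [hinv hz, hinv hy] at this
  exact hyz.not_ge this

theorem StrictMonoOn.continuousAt_of_rightInvOn [TopologicalSpace α] [OrderTopology α]
    [DenselyOrdered α] [TopologicalSpace β] [OrderTopology β] {y : β}
    (hg : StrictMonoOn g s) (hgst : MapsTo g s t) (hh : MapsTo h t s)
    (hinv : RightInvOn h g t) (hs : s ∈ 𝓝 (h y)) (ht : t ∈ 𝓝 y) : ContinuousAt h y := by
  have hsurj : s ⊆ h '' t := fun x hx =>
    ⟨g x, hgst hx, hg.injOn (hh (hgst hx)) hx (hinv (hgst hx))⟩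
  exact (hg.strictMonoOn_of_rightInvOn hh hinv).continuousAt_of_image_mem_nhds ht
    (mem_of_superset hs hsurj)

end RightInverse

theorem HasDerivAt.of_rightInvOn_strictMonoOn {g h : ℝ → ℝ} {s t : Set ℝ} {g' y : ℝ}
    (hg : StrictMonoOn g s) (hgst : MapsTo g s t) (hh : MapsTo h t s) (hinv : RightInvOn h g t)
    (hs : IsOpen s) (ht : IsOpen t) (hy : y ∈ t) (hd : HasDerivAt g g' (h y)) (hg' : g' ≠ 0) :
    HasDerivAt h g'⁻¹ y :=
  hd.of_local_left_inverse
    (hg.continuousAt_of_rightInvOn hgst hh hinv (hs.mem_nhds (hh hy)) (ht.mem_nhds hy)) hg'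
    (eventually_of_mem (ht.mem_nhds hy) hinv)

theorem StrictMonoOn.pos_of_Ici {φ : ℝ → ℝ} (hφm : StrictMonoOn φ (Ici 0)) (hφ0 : 0 ≤ φ 0)
    {x : ℝ} (hx : 0 < x) : 0 < φ x :=
  hφ0.trans_lt (hφm self_mem_Ici hx.le hx)

theorem MonotoneOn.strictMonoOn_id_mul_of_pos {φ : ℝ → ℝ} (hφm : MonotoneOn φ (Ioi 0))
    (hφpos : ∀ x ∈ Ioi (0 : ℝ), 0 < φ x) : StrictMonoOn (fun x => x * φ x) (Ioi 0) := by
  intro a ha b hb hab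
  calc a * φ a ≤ a * φ b := mul_le_mul_of_nonneg_left (hφm ha hb hab.le) (le_of_lt ha)
    _ < b * φ b := mul_lt_mul_of_pos_right hab (hφpos b hb)

theorem hash_supply_hasDerivAt_general
    (φ : ℝ → ℝ)
    (hφm : StrictMonoOn φ (Set.Ici 0))
    (hφ0 : 0 ≤ φ 0)
    (φ' : ℝ → ℝ)
    (hφd : ∀ x : ℝ, 0 < x → HasDerivAt φ (φ' x) x)
    (hφ'pos : ∀ x : ℝ, 0 < x → 0 < φ' x)
    (B Φ : ℝ) (hB : 0 < B) (hΦ : 0 ≤ Φ)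
    (Hs : ℝ → ℝ)
    (hHs : ∀ P : ℝ, 0 < P → 0 < Hs P ∧ Hs P * φ (Hs P) = P * (B + Φ)) :
    ∀ P : ℝ, 0 < P →
      HasDerivAt Hs ((B + Φ) / (φ (Hs P) + Hs P * φ' (Hs P))) P ∧
      0 < (B + Φ) / (φ (Hs P) + Hs P * φ' (Hs P)) := by
  intro P hP
  have hBΦ : 0 < B + Φ := by linarith
  have hφpos : ∀ x ∈ Ioi (0 : ℝ), 0 < φ x := fun x hx => hφm.pos_of_Ici hφ0 hx
  set g : ℝ → ℝ := fun H => H * φ H / (B + Φ)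
  have hg : StrictMonoOn g (Ioi 0) := fun a ha b hb hab =>
    div_lt_div_of_pos_right
      ((hφm.monotoneOn.mono Ioi_subset_Ici_self).strictMonoOn_id_mul_of_pos hφpos ha hb hab) hBΦ
  have hgmaps : MapsTo g (Ioi 0) (Ioi 0) := fun x hx => div_pos (mul_pos hx (hφpos x hx)) hBΦ
  have hHsmaps : MapsTo Hs (Ioi 0) (Ioi 0) := fun Q hQ => (hHs Q hQ).1
  have hinv : RightInvOn Hs g (Ioi 0) := fun Q hQ => by
    simp only [g, (hHs Q hQ).2, mul_div_cancel_right₀ _ hBΦ.ne']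
  have hHsP : 0 < Hs P := hHsmaps hP
  have hden : 0 < φ (Hs P) + Hs P * φ' (Hs P) := by
    have := hφpos _ hHsP
    have := hφ'pos _ hHsP
    positivity
  have hgd : HasDerivAt g ((φ (Hs P) + Hs P * φ' (Hs P)) / (B + Φ)) (Hs P) := by
    simpa using ((hasDerivAt_id _).mul (hφd _ hHsP)).div_const (B + Φ)
  refine ⟨?_, div_pos hBΦ hden⟩
  simpa only [inv_div] using HasDerivAt.of_rightInvOn_strictMonoOn hg hgmaps hHsmaps hinv
    isOpen_Ioi isOpen_Ioi hP hgd (div_pos hden hBΦ).ne'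

/-- If `φ` is differentiable on `(0,∞)` with `φ' > 0`, then the hash
supply function `H(P)` is differentiable on `(0,∞)` with
`H'(P) = (B+Φ)/(φ(H(P)) + H(P)·φ'(H(P)))`, and in particular `H'(P) > 0` for all `P > 0`. -/
theorem hash_supply_hasDerivAt
    (φ : ℝ → ℝ)
    (hφc : ContinuousOn φ (Set.Ici 0))
    (hφm : StrictMonoOn φ (Set.Ici 0))
    (hφ0 : 0 ≤ φ 0)
    (hφtop : Filter.Tendsto (fun H : ℝ => H * φ H) Filter.atTop Filter.atTop)
    (φ' : ℝ → ℝ)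
    (hφd : ∀ x : ℝ, 0 < x → HasDerivAt φ (φ' x) x)
    (hφ'pos : ∀ x : ℝ, 0 < x → 0 < φ' x)
    (B Φ : ℝ) (hB : 0 < B) (hΦ : 0 ≤ Φ)
    (Hs : ℝ → ℝ)
    (hHs : ∀ P : ℝ, 0 < P → 0 < Hs P ∧ Hs P * φ (Hs P) = P * (B + Φ)) :
    ∀ P : ℝ, 0 < P →
      HasDerivAt Hs ((B + Φ) / (φ (Hs P) + Hs P * φ' (Hs P))) P ∧
      0 < (B + Φ) / (φ (Hs P) + Hs P * φ' (Hs P)) :=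
  hash_supply_hasDerivAt_general φ hφm hφ0 φ' hφd hφ'pos B Φ hB hΦ Hs hHs
end

section
/- Along the hash supply curve, perceived safety converges as the price vanishes: ς(P, H(P)) → Ψ(s*/σ) as P → 0⁺, and Ψ(s*/σ) ∈ (0,1). -/
open Filter Set Topology

/-!
At the free-entry equilibrium the revenue `H φ(H)` equals `P (B + Φ)`, which vanishes with the
price. Since `H ↦ H φ(H)` is strictly increasing on `[0, ∞)` and vanishes at `0`, the hash supply
must vanish as well, so the safety signal `(s* − g P + k H(P)) / σ` tends to `s* / σ` and
continuity of `Ψ` finishes the argument.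
-/

theorem StrictMonoOn.id_mul_of_nonneg {φ : ℝ → ℝ} (hφm : StrictMonoOn φ (Ici 0))
    (hφ0 : 0 ≤ φ 0) : StrictMonoOn (fun x => x * φ x) (Ici 0) := by
  intro x hx y hy hxy
  have hφy : 0 < φ y := hφ0.trans_lt (hφm self_mem_Ici hy (hx.trans_lt hxy))
  calc x * φ x ≤ x * φ y := mul_le_mul_of_nonneg_left (hφm.monotoneOn hx hy hxy.le) hx
    _ < y * φ y := mul_lt_mul_of_pos_right hxy hφy

theorem StrictMonoOn.tendsto_of_tendsto_comp {α : Type*} {l : Filter α} {G : ℝ → ℝ} {a : ℝ}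
    (hG : StrictMonoOn G (Ici a)) {f : α → ℝ} (hf : ∀ᶠ x in l, a ≤ f x)
    (hGf : Tendsto (fun x => G (f x)) l (𝓝 (G a))) : Tendsto f l (𝓝 a) := by
  rw [tendsto_order]
  refine ⟨fun a' ha' => hf.mono fun x hx => ha'.trans_le hx, fun b hb => ?_⟩
  filter_upwards [hf, (tendsto_order.1 hGf).2 _ (hG self_mem_Ici hb.le hb)] with x hx hGx
  exact (hG.lt_iff_lt hx hb.le).1 hGx

theorem tendsto_hashSupply_zero {φ : ℝ → ℝ} (hφm : StrictMonoOn φ (Ici 0)) (hφ0 : 0 ≤ φ 0)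
    {c : ℝ} {Hs : ℝ → ℝ} (hHs : ∀ P : ℝ, 0 < P → 0 < Hs P ∧ Hs P * φ (Hs P) = P * c) :
    Tendsto Hs (𝓝[>] 0) (𝓝 0) := by
  have hrevenue : Tendsto (fun P => Hs P * φ (Hs P)) (𝓝[>] 0) (𝓝 (0 * φ 0)) := by
    have hlinear : Tendsto (fun P : ℝ => P * c) (𝓝[>] 0) (𝓝 (0 * c)) :=
      (tendsto_nhdsWithin_of_tendsto_nhds tendsto_id).mul_const c
    rw [zero_mul] at hlinear ⊢
    refine hlinear.congr' ?_
    filter_upwards [self_mem_nhdsWithin] with P hP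
    exact (hHs P hP).2.symm
  refine (hφm.id_mul_of_nonneg hφ0).tendsto_of_tendsto_comp ?_ hrevenue
  filter_upwards [self_mem_nhdsWithin] with P hP
  exact (hHs P hP).1.le

theorem safety_tendsto_at_zero_price_general
    (φ : ℝ → ℝ)
    (hφm : StrictMonoOn φ (Set.Ici 0))
    (hφ0 : 0 ≤ φ 0)
    (B Φ : ℝ)
    (Hs : ℝ → ℝ)
    (hHs : ∀ P : ℝ, 0 < P → 0 < Hs P ∧ Hs P * φ (Hs P) = P * (B + Φ))
    (Ψ : ℝ → ℝ)
    (hΨc : Continuous Ψ)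
    (hΨ01 : ∀ x : ℝ, 0 < Ψ x ∧ Ψ x < 1)
    (g k σ sstar : ℝ) :
    Tendsto (fun P : ℝ => Ψ ((sstar - g * P + k * Hs P) / σ))
        (nhdsWithin 0 (Set.Ioi 0)) (nhds (Ψ (sstar / σ))) ∧
      0 < Ψ (sstar / σ) ∧ Ψ (sstar / σ) < 1 := by
  have hprice : Tendsto (fun P : ℝ => P) (𝓝[>] 0) (𝓝 0) :=
    tendsto_nhdsWithin_of_tendsto_nhds tendsto_id
  have hsignal : Tendsto (fun P => (sstar - g * P + k * Hs P) / σ) (𝓝[>] 0)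
      (𝓝 ((sstar - g * 0 + k * 0) / σ)) :=
    ((tendsto_const_nhds.sub (hprice.const_mul g)).add
      ((tendsto_hashSupply_zero hφm hφ0 hHs).const_mul k)).div_const σ
  rw [mul_zero, mul_zero, sub_zero, add_zero] at hsignal
  exact ⟨hΨc.continuousAt.tendsto.comp hsignal, hΨ01 _⟩

/-- Along the hash supply curve, perceived safety converges as the price
vanishes: `ς(P, H(P)) → Ψ(s*/σ)` as `P → 0⁺`, and `Ψ(s*/σ) ∈ (0,1)`. -/
theorem safety_tendsto_at_zero_price
    (φ : ℝ → ℝ)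
    (hφc : ContinuousOn φ (Set.Ici 0))
    (hφm : StrictMonoOn φ (Set.Ici 0))
    (hφ0 : 0 ≤ φ 0)
    (hφtop : Filter.Tendsto (fun H : ℝ => H * φ H) Filter.atTop Filter.atTop)
    (B Φ : ℝ) (hB : 0 < B) (hΦ : 0 ≤ Φ)
    (Hs : ℝ → ℝ)
    (hHs : ∀ P : ℝ, 0 < P → 0 < Hs P ∧ Hs P * φ (Hs P) = P * (B + Φ))
    (Ψ : ℝ → ℝ)
    (hΨc : Continuous Ψ)
    (hΨm : StrictMono Ψ)
    (hΨ01 : ∀ x : ℝ, 0 < Ψ x ∧ Ψ x < 1)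
    (hΨbot : Tendsto Ψ atBot (nhds 0))
    (hΨtop : Tendsto Ψ atTop (nhds 1))
    (g k σ sstar : ℝ) (hg : 0 < g) (hk : 0 < k) (hσ : 0 < σ) :
    Tendsto (fun P : ℝ => Ψ ((sstar - g * P + k * Hs P) / σ))
        (nhdsWithin 0 (Set.Ioi 0)) (nhds (Ψ (sstar / σ))) ∧
      0 < Ψ (sstar / σ) ∧ Ψ (sstar / σ) < 1 :=
  safety_tendsto_at_zero_price_general φ hφm hφ0 B Φ Hs hHs Ψ hΨc hΨ01 g k σ sstar
end

section
/- If the price elasticity satisfies ε > 1, then aggregate demand explodes at low prices: D_agg(P) = θ_U·ς(P,H(P))·P^(−ε) + (θ_S·ς(P,H(P)) − δ)·P^(−1) → +∞ as P → 0⁺. -/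
open Filter Topology

/-!
Since `H(P) > 0` and `g·P ≤ g` for `P ≤ 1`, monotonicity of `Ψ` bounds the perceived safety
near zero price below by the positive constant `c = Ψ((s* − g)/σ)`. Dropping the nonnegative
term `θ_S·ς·P⁻¹`, aggregate demand is then at least `θ_U·c·P^(−ε) − δ·P⁻¹`, which tends to `+∞`
because `P^(−ε)` dominates `P⁻¹` when `ε > 1`.
-/

theorem tendsto_mul_rpow_sub_mul_atTop {a e : ℝ} (ha : 0 < a) (he : 1 < e) (b : ℝ) :
    Tendsto (fun x : ℝ => a * x ^ e - b * x) atTop atTop := by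
  have h : Tendsto (fun x : ℝ => (a * x ^ (e - 1) - b) * x) atTop atTop :=
    (tendsto_atTop_add_const_right _ (-b)
      ((tendsto_rpow_atTop (sub_pos.2 he)).const_mul_atTop ha)).atTop_mul_atTop₀ tendsto_id
  refine h.congr' ?_
  filter_upwards [eventually_gt_atTop 0] with x hx
  rw [Real.rpow_sub_one hx.ne']
  field_simp

theorem tendsto_mul_rpow_neg_sub_mul_inv_nhdsGT_zero {a e : ℝ} (ha : 0 < a) (he : 1 < e)
    (b : ℝ) : Tendsto (fun P : ℝ => a * P ^ (-e) - b * P⁻¹) (𝓝[>] 0) atTop := by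
  refine ((tendsto_mul_rpow_sub_mul_atTop ha he b).comp tendsto_inv_nhdsGT_zero).congr' ?_
  filter_upwards [self_mem_nhdsWithin] with P (hP : 0 < P)
  simp only [Function.comp_apply, Real.inv_rpow hP.le, Real.rpow_neg hP.le]

theorem le_safety_of_le_one {Ψ : ℝ → ℝ} (hΨ : Monotone Ψ) {g k σ s P H : ℝ} (hg : 0 ≤ g)
    (hk : 0 ≤ k) (hσ : 0 ≤ σ) (hP : P ≤ 1) (hH : 0 ≤ H) :
    Ψ ((s - g) / σ) ≤ Ψ ((s - g * P + k * H) / σ) := by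
  apply hΨ
  gcongr
  nlinarith [mul_nonneg hk hH]

theorem aggregate_demand_tendsto_atTop_at_zero_price_general
    (φ : ℝ → ℝ)
    (B Φ : ℝ)
    (Hs : ℝ → ℝ)
    (hHs : ∀ P : ℝ, 0 < P → 0 < Hs P ∧ Hs P * φ (Hs P) = P * (B + Φ))
    (Ψ : ℝ → ℝ)
    (hΨm : StrictMono Ψ)
    (hΨ01 : ∀ x : ℝ, 0 < Ψ x ∧ Ψ x < 1)
    (g k σ sstar : ℝ) (hg : 0 < g) (hk : 0 < k) (hσ : 0 < σ)
    (θU θS δ e : ℝ) (hθU : 0 < θU) (hθS : 0 < θS) (he : 1 < e) :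
    Tendsto
      (fun P : ℝ =>
        θU * Ψ ((sstar - g * P + k * Hs P) / σ) * P ^ (-e) +
          (θS * Ψ ((sstar - g * P + k * Hs P) / σ) - δ) * P⁻¹)
      (nhdsWithin 0 (Set.Ioi 0)) atTop := by
  set c := Ψ ((sstar - g) / σ)
  have hc : 0 < c := (hΨ01 _).1
  refine tendsto_atTop_mono' _ ?_
    (tendsto_mul_rpow_neg_sub_mul_inv_nhdsGT_zero (mul_pos hθU hc) he δ)
  filter_upwards [Ioc_mem_nhdsGT one_pos] with P ⟨hP0, hP1⟩
  have hςc : c ≤ Ψ ((sstar - g * P + k * Hs P) / σ) :=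
    le_safety_of_le_one hΨm.monotone hg.le hk.le hσ.le hP1 (hHs P hP0).1.le
  have hςpos := (hΨ01 ((sstar - g * P + k * Hs P) / σ)).1
  have hPe : 0 ≤ P ^ (-e) := Real.rpow_nonneg hP0.le _
  have hPinv : 0 ≤ P⁻¹ := inv_nonneg.2 hP0.le
  nlinarith [mul_le_mul_of_nonneg_left hςc hθU.le, mul_nonneg (mul_pos hθS hςpos).le hPinv]

/-- If the price elasticity satisfies `ε > 1`, then aggregate demand
explodes at low prices:
`D_agg(P) = θ_U·ς(P,H(P))·P^(−ε) + (θ_S·ς(P,H(P)) − δ)·P^(−1) → +∞` as `P → 0⁺`. -/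
theorem aggregate_demand_tendsto_atTop_at_zero_price
    (φ : ℝ → ℝ)
    (hφc : ContinuousOn φ (Set.Ici 0))
    (hφm : StrictMonoOn φ (Set.Ici 0))
    (hφ0 : 0 ≤ φ 0)
    (hφtop : Filter.Tendsto (fun H : ℝ => H * φ H) Filter.atTop Filter.atTop)
    (B Φ : ℝ) (hB : 0 < B) (hΦ : 0 ≤ Φ)
    (Hs : ℝ → ℝ)
    (hHs : ∀ P : ℝ, 0 < P → 0 < Hs P ∧ Hs P * φ (Hs P) = P * (B + Φ))
    (Ψ : ℝ → ℝ)
    (hΨc : Continuous Ψ)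
    (hΨm : StrictMono Ψ)
    (hΨ01 : ∀ x : ℝ, 0 < Ψ x ∧ Ψ x < 1)
    (hΨbot : Tendsto Ψ atBot (nhds 0))
    (hΨtop : Tendsto Ψ atTop (nhds 1))
    (g k σ sstar : ℝ) (hg : 0 < g) (hk : 0 < k) (hσ : 0 < σ)
    (θU θS δ e : ℝ) (hθU : 0 < θU) (hθS : 0 < θS) (hδ : 0 ≤ δ) (he : 1 < e) :
    Tendsto
      (fun P : ℝ =>
        θU * Ψ ((sstar - g * P + k * Hs P) / σ) * P ^ (-e) +
          (θS * Ψ ((sstar - g * P + k * Hs P) / σ) - δ) * P⁻¹)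
      (nhdsWithin 0 (Set.Ioi 0)) atTop :=
  aggregate_demand_tendsto_atTop_at_zero_price_general φ B Φ Hs hHs Ψ hΨm hΨ01 g k σ sstar hg hk hσ
    θU θS δ e hθU hθS he
end

section
/- (Theorem 1, Existence of a RESUNE.) If the price elasticity satisfies ε > 1, then for every asset supply Q > 0 there exist P* > 0 and H* > 0 such that H*·φ(H*) = P*·(B+Φ) (miner free entry) and D(P*, ς(P*, H*)) = Q (asset market clearing); that is, a Rational-Expectations Security-Utility Nash Equilibrium exists. -/
open Filter

/-- **Theorem 1, Existence of a RESUNE.** If the price elasticity satisfies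
`ε > 1`, then for every asset supply `Q > 0` there exist `P* > 0` and `H* > 0` such that
`H*·φ(H*) = P*·(B+Φ)` (miner free entry) and `D(P*, ς(P*, H*)) = Q` (asset market clearing);
that is, a Rational-Expectations Security-Utility Nash Equilibrium exists. -/
theorem resune_exists
    (φ : ℝ → ℝ)
    (hφc : ContinuousOn φ (Set.Ici 0))
    (hφm : StrictMonoOn φ (Set.Ici 0))
    (hφ0 : 0 ≤ φ 0)
    (hφtop : Filter.Tendsto (fun H : ℝ => H * φ H) Filter.atTop Filter.atTop)
    (B Φ : ℝ) (hB : 0 < B) (hΦ : 0 ≤ Φ)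
    (Ψ : ℝ → ℝ)
    (hΨc : Continuous Ψ)
    (hΨm : StrictMono Ψ)
    (hΨ01 : ∀ x : ℝ, 0 < Ψ x ∧ Ψ x < 1)
    (hΨbot : Tendsto Ψ atBot (nhds 0))
    (hΨtop : Tendsto Ψ atTop (nhds 1))
    (g k σ sstar : ℝ) (hg : 0 < g) (hk : 0 < k) (hσ : 0 < σ)
    (θU θS δ e : ℝ) (hθU : 0 < θU) (hθS : 0 < θS) (hδ : 0 ≤ δ) (he : 1 < e)
    (Q : ℝ) (hQ : 0 < Q) :
    ∃ Pstar Hstar : ℝ, 0 < Pstar ∧ 0 < Hstar ∧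
      Hstar * φ Hstar = Pstar * (B + Φ) ∧
      θU * Ψ ((sstar - g * Pstar + k * Hstar) / σ) * Pstar ^ (-e) +
          (θS * Ψ ((sstar - g * Pstar + k * Hstar) / σ) - δ) * Pstar⁻¹ = Q := by
  set c := B + Φ with hc_def
  have hc : 0 < c := by simp only [hc_def]; linarith
  set f : ℝ → ℝ := fun H => H * φ H with hf_def
  have hfc : ContinuousOn f (Set.Ici 0) := continuousOn_id.mul hφc
  have hφpos : ∀ H : ℝ, 0 < H → 0 < φ H := fun H hH =>
    lt_of_le_of_lt hφ0 (hφm (Set.mem_Ici.2 le_rfl) (Set.mem_Ici.2 hH.le) hH)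
  have hfpos : ∀ H : ℝ, 0 < H → 0 < f H := fun H hH => mul_pos hH (hφpos H hH)
  set m := Ψ ((sstar - 1) / σ) with hm_def
  have hm : 0 < m := (hΨ01 _).1
  have he1 : (0:ℝ) < e - 1 := by linarith
  obtain ⟨q0, hq0A, hq0g1⟩ :=
    (((tendsto_rpow_atTop he1).eventually_ge_atTop ((δ + Q) / (θU * m))).and
      (eventually_ge_atTop (max g 1))).exists
  have hq0g : g ≤ q0 := le_trans (le_max_left _ _) hq0g1
  have hq01 : (1:ℝ) ≤ q0 := le_trans (le_max_right _ _) hq0g1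
  have hq0pos : (0:ℝ) < q0 := by linarith
  have hp0pos : (0:ℝ) < q0⁻¹ := inv_pos.2 hq0pos
  have hf0 : Tendsto f (nhdsWithin 0 (Set.Ioi 0)) (nhds 0) := by
    have h0 : f 0 = 0 := by simp [hf_def]
    have h1 := (hfc 0 (Set.mem_Ici.2 le_rfl)).tendsto
    rw [h0] at h1
    exact h1.mono_left (nhdsWithin_mono _ Set.Ioi_subset_Ici_self)
  obtain ⟨Ha, hHa_small, hHa_pos⟩ :=
    ((hf0.eventually (gt_mem_nhds (mul_pos hp0pos hc))).and self_mem_nhdsWithin).exists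
  have hHa_pos' : (0:ℝ) < Ha := hHa_pos
  set M := max 1 ((θU + θS) / Q) with hM_def
  obtain ⟨Hb, hHb_big, hHb_ge⟩ :=
    ((hφtop.eventually_ge_atTop (c * M)).and (eventually_ge_atTop (Ha + 1))).exists
  have hab : Ha ≤ Hb := by linarith
  set G : ℝ → ℝ := fun H =>
    θU * Ψ ((sstar - g * (f H / c) + k * H) / σ) * (f H / c) ^ (-e) +
      (θS * Ψ ((sstar - g * (f H / c) + k * H) / σ) - δ) * (f H / c)⁻¹ with hG_def
  have hsub : Set.Icc Ha Hb ⊆ Set.Ici 0 := fun x hx => le_trans hHa_pos'.le hx.1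
  have hPpos : ∀ H ∈ Set.Icc Ha Hb, 0 < f H / c := fun H hH =>
    div_pos (hfpos H (lt_of_lt_of_le hHa_pos' hH.1)) hc
  have hP_cont : ContinuousOn (fun H => f H / c) (Set.Icc Ha Hb) :=
    (hfc.mono hsub).div_const c
  have harg_cont : ContinuousOn (fun H => Ψ ((sstar - g * (f H / c) + k * H) / σ))
      (Set.Icc Ha Hb) := by
    apply hΨc.comp_continuousOn
    exact ((continuousOn_const.sub (continuousOn_const.mul hP_cont)).add
      (continuousOn_const.mul continuousOn_id)).div_const σ
  have hGc : ContinuousOn G (Set.Icc Ha Hb) := by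
    apply ContinuousOn.add
    · exact (continuousOn_const.mul harg_cont).mul
        (hP_cont.rpow_const fun x hx => Or.inl (ne_of_gt (hPpos x hx)))
    · exact ((continuousOn_const.mul harg_cont).sub continuousOn_const).mul
        (hP_cont.inv₀ fun x hx => ne_of_gt (hPpos x hx))
  -- lower bound at Ha
  have hGa : Q ≤ G Ha := by
    simp only [hG_def]
    set P := f Ha / c with hP_def
    have hP : 0 < P := hPpos Ha ⟨le_rfl, hab⟩
    have hPlt : P < q0⁻¹ := (div_lt_iff₀ hc).2 hHa_small
    set q := P⁻¹ with hq_def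
    have hqpos : 0 < q := inv_pos.2 hP
    have hq_gt : q0 < q := by
      have h2 := (inv_lt_inv₀ hp0pos hP).2 hPlt
      rwa [inv_inv] at h2
    have hgP : g * P ≤ 1 := by
      have h1 : P ≤ g⁻¹ := le_trans hPlt.le (inv_anti₀ hg hq0g)
      calc g * P ≤ g * g⁻¹ := mul_le_mul_of_nonneg_left h1 hg.le
        _ = 1 := mul_inv_cancel₀ (ne_of_gt hg)
    set ς := Ψ ((sstar - g * P + k * Ha) / σ) with hς_def
    have hςm : m ≤ ς := by
      apply hΨm.monotone
      apply (div_le_div_iff_of_pos_right hσ).2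
      have hk' : 0 ≤ k * Ha := mul_nonneg hk.le hHa_pos'.le
      linarith
    have hς0 : 0 < ς := (hΨ01 _).1
    have hPe : P ^ (-e) = q ^ e := by
      rw [hq_def, Real.rpow_neg hP.le, ← Real.inv_rpow hP.le]
    have hqe : q ^ e = q ^ (e - 1) * q := by
      rw [← Real.rpow_add_one (ne_of_gt hqpos) (e - 1)]
      norm_num
    have hq1 : q0 ^ (e - 1) ≤ q ^ (e - 1) :=
      Real.rpow_le_rpow hq0pos.le hq_gt.le he1.le
    have hq1pos : 0 < q0 ^ (e - 1) := Real.rpow_pos_of_pos hq0pos _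
    have hA : δ + Q ≤ θU * m * q0 ^ (e - 1) := by
      rw [div_le_iff₀ (mul_pos hθU hm)] at hq0A
      calc δ + Q ≤ q0 ^ (e - 1) * (θU * m) := hq0A
        _ = θU * m * q0 ^ (e - 1) := by ring
    have hq_ge1 : 1 ≤ q := le_trans hq01 hq_gt.le
    have s0 : θU * m ≤ θU * ς := mul_le_mul_of_nonneg_left hςm hθU.le
    have s1 : θU * m * q0 ^ (e - 1) ≤ θU * ς * q ^ (e - 1) :=
      mul_le_mul s0 hq1 hq1pos.le (mul_pos hθU hς0).le
    have s2 : (δ + Q) * q ≤ θU * ς * q ^ (e - 1) * q :=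
      mul_le_mul_of_nonneg_right (hA.trans s1) hqpos.le
    have s3 : 0 ≤ (θS * ς) * q := mul_nonneg (mul_pos hθS hς0).le hqpos.le
    have s4 : Q ≤ Q * q := le_mul_of_one_le_right hQ.le hq_ge1
    rw [hPe, hqe]
    nlinarith [s2, s3, s4]
  -- upper bound at Hb
  have hGb : G Hb ≤ Q := by
    simp only [hG_def]
    set P := f Hb / c with hP_def
    have hMP : M ≤ P := by
      rw [hP_def, le_div_iff₀ hc]
      linarith
    have hP1 : (1:ℝ) ≤ P := le_trans (le_max_left _ _) hMP
    have hP : (0:ℝ) < P := by linarith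
    have hPQ : (θU + θS) / Q ≤ P := le_trans (le_max_right _ _) hMP
    set ς := Ψ ((sstar - g * P + k * Hb) / σ) with hς_def
    have hς0 : 0 < ς := (hΨ01 _).1
    have hς1 : ς < 1 := (hΨ01 _).2
    have h1 : P ^ (-e) ≤ P⁻¹ := by
      rw [← Real.rpow_neg_one P]
      exact Real.rpow_le_rpow_of_exponent_le hP1 (by linarith)
    have hPe_pos : 0 < P ^ (-e) := Real.rpow_pos_of_pos hP _
    have hPinv_pos : 0 < P⁻¹ := inv_pos.2 hP
    have h2 : θU + θS ≤ Q * P := by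
      rw [div_le_iff₀ hQ] at hPQ
      linarith
    have h3 : P * P⁻¹ = 1 := mul_inv_cancel₀ (ne_of_gt hP)
    have t1a : θU * ς ≤ θU := mul_le_of_le_one_right hθU.le hς1.le
    have t1 : θU * ς * P ^ (-e) ≤ θU * P⁻¹ :=
      le_trans (mul_le_mul_of_nonneg_right t1a hPe_pos.le)
        (mul_le_mul_of_nonneg_left h1 hθU.le)
    have t2a : θS * ς - δ ≤ θS := by
      have := mul_le_of_le_one_right hθS.le hς1.le
      linarith
    have t2 : (θS * ς - δ) * P⁻¹ ≤ θS * P⁻¹ :=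
      mul_le_mul_of_nonneg_right t2a hPinv_pos.le
    have t3 : (θU + θS) * P⁻¹ ≤ Q := by
      calc (θU + θS) * P⁻¹ ≤ Q * P * P⁻¹ := mul_le_mul_of_nonneg_right h2 hPinv_pos.le
        _ = Q := by rw [mul_assoc, h3, mul_one]
    linarith
  obtain ⟨Hs, hHs_mem, hGHs⟩ := intermediate_value_Icc' hab hGc ⟨hGb, hGa⟩
  have hHs_pos : 0 < Hs := lt_of_lt_of_le hHa_pos' hHs_mem.1
  refine ⟨f Hs / c, Hs, div_pos (hfpos Hs hHs_pos) hc, hHs_pos, ?_, ?_⟩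
  · rw [div_mul_cancel₀ _ (ne_of_gt hc), hf_def]
  · simp only [hG_def] at hGHs
    exact hGHs
end

section
/- (Theorem 2, Uniqueness of the RESUNE.) Suppose φ is differentiable on (0,∞) with φ' > 0 and Ψ is differentiable with Ψ' > 0. Writing ς = ς(P,H(P)) and x(P) = (s* − g·P + k·H(P))/σ, assume that for all P > 0 the direct price effect is negative and dominates the indirect security-feedback effect, i.e., ε·θ_U·ς·P^(−ε−1) + (θ_S·ς − δ)·P^(−2) + (θ_U·P^(−ε) + θ_S·P^(−1))·Ψ'(x(P))·(g/σ) > (θ_U·P^(−ε) + θ_S·P^(−1))·Ψ'(x(P))·(k/σ)·H'(P). Then D_agg is strictly decreasing on (0,∞), and for every Q > 0 there is at most one P* > 0 with D_agg(P*) = Q; hence the RESUNE is unique. -/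
open Filter

/-! The derivative of aggregate demand along the hash supply curve splits into the direct
price effect, the loss of safety as attacks become more profitable (the `g` term), and the
security feedback through `H'(P)`; the dominance hypothesis says exactly that this derivative
is negative, so `D_agg` is strictly decreasing by the mean value theorem and takes each value
at most once. Since `H ↦ H φ(H)` is strictly increasing, the free-entry condition determines
`H*` from `P*`. -/

lemma StrictMonoOn.id_mul_of_map_zero_nonneg {φ : ℝ → ℝ} (hφm : StrictMonoOn φ (Set.Ici 0))
    (hφ0 : 0 ≤ φ 0) : StrictMonoOn (fun H : ℝ => H * φ H) (Set.Ici 0) := by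
  intro a ha b hb hab
  have hb0 : 0 < b := lt_of_le_of_lt ha hab
  have hφb : 0 < φ b := hφ0.trans_lt (hφm Set.self_mem_Ici hb hb0)
  calc a * φ a ≤ a * φ b := mul_le_mul_of_nonneg_left (hφm ha hb hab).le ha
    _ < b * φ b := mul_lt_mul_of_pos_right hab hφb

lemma strictAntiOn_of_hasDerivAt_neg {D : Set ℝ} (hD : Convex ℝ D) (hDo : IsOpen D)
    {f f' : ℝ → ℝ} (hf : ∀ x ∈ D, HasDerivAt f (f' x) x) (hf' : ∀ x ∈ D, f' x < 0) :
    StrictAntiOn f D := by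
  refine strictAntiOn_of_hasDerivWithinAt_neg (f' := f') hD
    (fun x hx => (hf x hx).continuousAt.continuousWithinAt) ?_ ?_ <;> rw [hDo.interior_eq]
  · exact fun x hx => (hf x hx).hasDerivWithinAt
  · exact hf'

lemma hasDerivAt_demand {Ψ s : ℝ → ℝ} {ψ' s' P : ℝ} (θU θS δ e : ℝ) (hP : 0 < P)
    (hs : HasDerivAt s s' P) (hΨ : HasDerivAt Ψ ψ' (s P)) :
    HasDerivAt (fun P : ℝ => θU * Ψ (s P) * P ^ (-e) + (θS * Ψ (s P) - δ) * P⁻¹)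
      ((θU * P ^ (-e) + θS * P⁻¹) * ψ' * s'
        - (e * θU * Ψ (s P) * P ^ (-e - 1) + (θS * Ψ (s P) - δ) * P ^ (-(2 : ℝ)))) P := by
  have hΨs : HasDerivAt (fun P => Ψ (s P)) (ψ' * s') P := hΨ.comp P hs
  have hrpow : HasDerivAt (fun P : ℝ => P ^ (-e)) (-e * P ^ (-e - 1)) P := by
    simpa only [mul_comm] using Real.hasDerivAt_rpow_const (p := -e) (Or.inl hP.ne')
  have hinv : HasDerivAt (fun P : ℝ => P⁻¹) (-P ^ (-(2 : ℝ))) P := by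
    rw [Real.rpow_neg hP.le, Real.rpow_two]
    exact hasDerivAt_inv hP.ne'
  exact ((hΨs.const_mul θU).mul hrpow).add (((hΨs.const_mul θS).sub_const δ).mul hinv)
    |>.congr_deriv (by ring)

theorem resune_unique_general
    (φ : ℝ → ℝ)
    (hφm : StrictMonoOn φ (Set.Ici 0))
    (hφ0 : 0 ≤ φ 0)
    (B Φ : ℝ)
    (Hs : ℝ → ℝ)
    (hHs : ∀ P : ℝ, 0 < P → 0 < Hs P ∧ Hs P * φ (Hs P) = P * (B + Φ))
    (Hs' : ℝ → ℝ)
    (hHs' : ∀ P : ℝ, 0 < P → HasDerivAt Hs (Hs' P) P)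
    (Ψ : ℝ → ℝ)
    (Ψ' : ℝ → ℝ)
    (hΨd : ∀ x : ℝ, HasDerivAt Ψ (Ψ' x) x)
    (g k σ sstar : ℝ)
    (θU θS δ e : ℝ)
    (hdom : ∀ P : ℝ, 0 < P →
      e * θU * Ψ ((sstar - g * P + k * Hs P) / σ) * P ^ (-e - 1)
          + (θS * Ψ ((sstar - g * P + k * Hs P) / σ) - δ) * P ^ (-(2 : ℝ))
          + (θU * P ^ (-e) + θS * P⁻¹) * Ψ' ((sstar - g * P + k * Hs P) / σ) * (g / σ)
        > (θU * P ^ (-e) + θS * P⁻¹) * Ψ' ((sstar - g * P + k * Hs P) / σ) * (k / σ) * Hs' P) :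
    StrictAntiOn
      (fun P : ℝ =>
        θU * Ψ ((sstar - g * P + k * Hs P) / σ) * P ^ (-e) +
          (θS * Ψ ((sstar - g * P + k * Hs P) / σ) - δ) * P⁻¹)
      (Set.Ioi 0) ∧
    (∀ Q : ℝ, 0 < Q → ∀ P₁ H₁ P₂ H₂ : ℝ,
      (0 < P₁ ∧ 0 < H₁ ∧ H₁ * φ H₁ = P₁ * (B + Φ) ∧
        θU * Ψ ((sstar - g * P₁ + k * H₁) / σ) * P₁ ^ (-e) +
          (θS * Ψ ((sstar - g * P₁ + k * H₁) / σ) - δ) * P₁⁻¹ = Q) →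
      (0 < P₂ ∧ 0 < H₂ ∧ H₂ * φ H₂ = P₂ * (B + Φ) ∧
        θU * Ψ ((sstar - g * P₂ + k * H₂) / σ) * P₂ ^ (-e) +
          (θS * Ψ ((sstar - g * P₂ + k * H₂) / σ) - δ) * P₂⁻¹ = Q) →
      P₁ = P₂ ∧ H₁ = H₂) := by
  have hsignal : ∀ P, 0 < P → HasDerivAt (fun P => (sstar - g * P + k * Hs P) / σ)
      ((-g + k * Hs' P) / σ) P := fun P hP =>
    (((hasDerivAt_id' P).const_mul g).const_sub sstar |>.add
      ((hHs' P hP).const_mul k)).div_const σ |>.congr_deriv (by ring)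
  have hanti := strictAntiOn_of_hasDerivAt_neg (convex_Ioi 0) isOpen_Ioi
    (fun P hP => hasDerivAt_demand θU θS δ e hP (hsignal P hP) (hΨd _))
    (fun P hP => by linear_combination hdom P hP)
  refine ⟨hanti, ?_⟩
  rintro Q - P₁ H₁ P₂ H₂ ⟨hP₁, hH₁, hfree₁, hD₁⟩ ⟨hP₂, hH₂, hfree₂, hD₂⟩
  have hsupply : ∀ {P H : ℝ}, 0 < P → 0 < H → H * φ H = P * (B + Φ) → H = Hs P :=
    fun hP hH hfree => (hφm.id_mul_of_map_zero_nonneg hφ0).injOn hH.le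
      (hHs _ hP).1.le (hfree.trans (hHs _ hP).2.symm)
  obtain rfl := hsupply hP₁ hH₁ hfree₁
  obtain rfl := hsupply hP₂ hH₂ hfree₂
  obtain rfl : P₁ = P₂ := hanti.injOn hP₁ hP₂ (hD₁.trans hD₂.symm)
  exact ⟨rfl, rfl⟩

/-- **Theorem 2, Uniqueness of the RESUNE.** Suppose `φ` is differentiable on
`(0,∞)` with `φ' > 0` and `Ψ` is differentiable with `Ψ' > 0`. Writing `ς = ς(P,H(P))` and
`x(P) = (s* − g·P + k·H(P))/σ`, assume that for all `P > 0` the direct price effect is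
negative and dominates the indirect security-feedback effect, i.e.
`ε·θ_U·ς·P^(−ε−1) + (θ_S·ς − δ)·P^(−2) + (θ_U·P^(−ε) + θ_S·P^(−1))·Ψ'(x(P))·(g/σ)
  > (θ_U·P^(−ε) + θ_S·P^(−1))·Ψ'(x(P))·(k/σ)·H'(P)`.
Then `D_agg` is strictly decreasing on `(0,∞)`, and for every `Q > 0` there is at most one
`P* > 0` with `D_agg(P*) = Q`; hence the RESUNE is unique. -/
theorem resune_unique
    (φ : ℝ → ℝ)
    (hφc : ContinuousOn φ (Set.Ici 0))
    (hφm : StrictMonoOn φ (Set.Ici 0))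
    (hφ0 : 0 ≤ φ 0)
    (hφtop : Filter.Tendsto (fun H : ℝ => H * φ H) Filter.atTop Filter.atTop)
    (φ' : ℝ → ℝ)
    (hφd : ∀ x : ℝ, 0 < x → HasDerivAt φ (φ' x) x)
    (hφ'pos : ∀ x : ℝ, 0 < x → 0 < φ' x)
    (B Φ : ℝ) (hB : 0 < B) (hΦ : 0 ≤ Φ)
    (Hs : ℝ → ℝ)
    (hHs : ∀ P : ℝ, 0 < P → 0 < Hs P ∧ Hs P * φ (Hs P) = P * (B + Φ))
    (Hs' : ℝ → ℝ)
    (hHs' : ∀ P : ℝ, 0 < P → HasDerivAt Hs (Hs' P) P)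
    (Ψ : ℝ → ℝ)
    (hΨc : Continuous Ψ)
    (hΨm : StrictMono Ψ)
    (hΨ01 : ∀ x : ℝ, 0 < Ψ x ∧ Ψ x < 1)
    (hΨbot : Tendsto Ψ atBot (nhds 0))
    (hΨtop : Tendsto Ψ atTop (nhds 1))
    (Ψ' : ℝ → ℝ)
    (hΨd : ∀ x : ℝ, HasDerivAt Ψ (Ψ' x) x)
    (hΨ'pos : ∀ x : ℝ, 0 < Ψ' x)
    (g k σ sstar : ℝ) (hg : 0 < g) (hk : 0 < k) (hσ : 0 < σ)
    (θU θS δ e : ℝ) (hθU : 0 < θU) (hθS : 0 < θS) (hδ : 0 ≤ δ) (he : 0 < e)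
    (hdom : ∀ P : ℝ, 0 < P →
      e * θU * Ψ ((sstar - g * P + k * Hs P) / σ) * P ^ (-e - 1)
          + (θS * Ψ ((sstar - g * P + k * Hs P) / σ) - δ) * P ^ (-(2 : ℝ))
          + (θU * P ^ (-e) + θS * P⁻¹) * Ψ' ((sstar - g * P + k * Hs P) / σ) * (g / σ)
        > (θU * P ^ (-e) + θS * P⁻¹) * Ψ' ((sstar - g * P + k * Hs P) / σ) * (k / σ) * Hs' P) :
    StrictAntiOn
      (fun P : ℝ =>
        θU * Ψ ((sstar - g * P + k * Hs P) / σ) * P ^ (-e) +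
          (θS * Ψ ((sstar - g * P + k * Hs P) / σ) - δ) * P⁻¹)
      (Set.Ioi 0) ∧
    (∀ Q : ℝ, 0 < Q → ∀ P₁ H₁ P₂ H₂ : ℝ,
      (0 < P₁ ∧ 0 < H₁ ∧ H₁ * φ H₁ = P₁ * (B + Φ) ∧
        θU * Ψ ((sstar - g * P₁ + k * H₁) / σ) * P₁ ^ (-e) +
          (θS * Ψ ((sstar - g * P₁ + k * H₁) / σ) - δ) * P₁⁻¹ = Q) →
      (0 < P₂ ∧ 0 < H₂ ∧ H₂ * φ H₂ = P₂ * (B + Φ) ∧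
        θU * Ψ ((sstar - g * P₂ + k * H₂) / σ) * P₂ ^ (-e) +
          (θS * Ψ ((sstar - g * P₂ + k * H₂) / σ) - δ) * P₂⁻¹ = Q) →
      P₁ = P₂ ∧ H₁ = H₂) :=
  resune_unique_general φ hφm hφ0 B Φ Hs hHs Hs' hHs' Ψ Ψ' hΨd g k σ sstar θU θS δ e hdom
end

section
/- (Halving lowers safety and demand at every price.) Let 0 < B₂ < B₁ be two block subsidies and, for i = 1,2, let H_i(P) denote the unique H > 0 with H·φ(H) = P·(B_i+Φ). Then for every P > 0: ς(P, H₂(P)) < ς(P, H₁(P)), and consequently the aggregate demand curve shifts down: D(P, ς(P, H₂(P))) < D(P, ς(P, H₁(P))). -/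
open Filter Set

/-!
A lower subsidy lowers the miners' revenue `P·(B + Φ)` at every price, and since the cost
curve `H ↦ H·φ(H)` is strictly increasing on `[0, ∞)`, it lowers the equilibrium hash rate.
Perceived safety is strictly increasing in the hash rate, and demand is an affine function of
safety with positive slope `θ_U·P^(-ε) + θ_S/P`, so both drop.
-/

theorem strictMonoOn_mul_self_Ici {α : Type*} [Semiring α] [PartialOrder α]
    [IsStrictOrderedRing α] {φ : α → α} (hφ : StrictMonoOn φ (Ici 0)) (hφ0 : 0 ≤ φ 0) :
    StrictMonoOn (fun x => x * φ x) (Ici 0) := by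
  intro a (ha : 0 ≤ a) b (hb : 0 ≤ b) hab
  have hφa : 0 ≤ φ a := hφ0.trans (hφ.monotoneOn self_mem_Ici ha ha)
  have hφab : φ a < φ b := hφ ha hb hab
  calc a * φ a ≤ a * φ b := mul_le_mul_of_nonneg_left hφab.le ha
    _ < b * φ b := mul_lt_mul_of_pos_right hab (hφa.trans_lt hφab)

noncomputable def perceivedSafety (Ψ : ℝ → ℝ) (g k σ sstar P H : ℝ) : ℝ :=
  Ψ ((sstar - g * P + k * H) / σ)

noncomputable def assetDemand (θU θS δ e P ς : ℝ) : ℝ :=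
  θU * ς * P ^ (-e) + (θS * ς - δ) * P⁻¹

theorem perceivedSafety_strictMono {Ψ : ℝ → ℝ} (hΨ : StrictMono Ψ) {k σ : ℝ} (hk : 0 < k)
    (hσ : 0 < σ) (g sstar P : ℝ) : StrictMono (perceivedSafety Ψ g k σ sstar P) :=
  fun _ _ h => hΨ (by gcongr)

theorem assetDemand_strictMono {θU θS : ℝ} (hθU : 0 < θU) (hθS : 0 < θS) (δ e : ℝ) {P : ℝ}
    (hP : 0 < P) : StrictMono (assetDemand θU θS δ e P) := by
  have : 0 < P ^ (-e) := Real.rpow_pos_of_pos hP _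
  intro _ _ h
  unfold assetDemand
  gcongr

theorem halving_lowers_safety_and_demand_general
    (φ : ℝ → ℝ)
    (hφm : StrictMonoOn φ (Set.Ici 0))
    (hφ0 : 0 ≤ φ 0)
    (Φ : ℝ)
    (B₁ B₂ : ℝ) (hB : B₂ < B₁)
    (H₁ H₂ : ℝ → ℝ)
    (hH₁ : ∀ P : ℝ, 0 < P → 0 < H₁ P ∧ H₁ P * φ (H₁ P) = P * (B₁ + Φ))
    (hH₂ : ∀ P : ℝ, 0 < P → 0 < H₂ P ∧ H₂ P * φ (H₂ P) = P * (B₂ + Φ))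
    (Ψ : ℝ → ℝ)
    (hΨm : StrictMono Ψ)
    (g k σ sstar : ℝ) (hk : 0 < k) (hσ : 0 < σ)
    (θU θS δ e : ℝ) (hθU : 0 < θU) (hθS : 0 < θS) :
    ∀ P : ℝ, 0 < P →
      Ψ ((sstar - g * P + k * H₂ P) / σ) < Ψ ((sstar - g * P + k * H₁ P) / σ) ∧
      θU * Ψ ((sstar - g * P + k * H₂ P) / σ) * P ^ (-e) +
          (θS * Ψ ((sstar - g * P + k * H₂ P) / σ) - δ) * P⁻¹
        < θU * Ψ ((sstar - g * P + k * H₁ P) / σ) * P ^ (-e) +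
            (θS * Ψ ((sstar - g * P + k * H₁ P) / σ) - δ) * P⁻¹ := by
  intro P hP
  obtain ⟨hH₁pos, hH₁eq⟩ := hH₁ P hP
  obtain ⟨hH₂pos, hH₂eq⟩ := hH₂ P hP
  have hrevenue : H₂ P * φ (H₂ P) < H₁ P * φ (H₁ P) := by
    rw [hH₁eq, hH₂eq]
    exact mul_lt_mul_of_pos_left (by linarith) hP
  have hH : H₂ P < H₁ P :=
    ((strictMonoOn_mul_self_Ici hφm hφ0).lt_iff_lt hH₂pos.le hH₁pos.le).mp hrevenue
  have hς := perceivedSafety_strictMono hΨm hk hσ g sstar P hH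
  exact ⟨hς, assetDemand_strictMono hθU hθS δ e hP hς⟩

/-- **Halving lowers safety and demand at every price.** Let `0 < B₂ < B₁` be
two block subsidies and, for `i = 1,2`, let `H_i(P)` denote the unique `H > 0` with
`H·φ(H) = P·(B_i+Φ)`. Then for every `P > 0`: `ς(P, H₂(P)) < ς(P, H₁(P))`, and consequently
the aggregate demand curve shifts down: `D(P, ς(P, H₂(P))) < D(P, ς(P, H₁(P)))`. -/
theorem halving_lowers_safety_and_demand
    (φ : ℝ → ℝ)
    (hφc : ContinuousOn φ (Set.Ici 0))
    (hφm : StrictMonoOn φ (Set.Ici 0))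
    (hφ0 : 0 ≤ φ 0)
    (hφtop : Filter.Tendsto (fun H : ℝ => H * φ H) Filter.atTop Filter.atTop)
    (Φ : ℝ) (hΦ : 0 ≤ Φ)
    (B₁ B₂ : ℝ) (hB₂ : 0 < B₂) (hB : B₂ < B₁)
    (H₁ H₂ : ℝ → ℝ)
    (hH₁ : ∀ P : ℝ, 0 < P → 0 < H₁ P ∧ H₁ P * φ (H₁ P) = P * (B₁ + Φ))
    (hH₂ : ∀ P : ℝ, 0 < P → 0 < H₂ P ∧ H₂ P * φ (H₂ P) = P * (B₂ + Φ))
    (Ψ : ℝ → ℝ)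
    (hΨc : Continuous Ψ)
    (hΨm : StrictMono Ψ)
    (hΨ01 : ∀ x : ℝ, 0 < Ψ x ∧ Ψ x < 1)
    (hΨbot : Tendsto Ψ atBot (nhds 0))
    (hΨtop : Tendsto Ψ atTop (nhds 1))
    (g k σ sstar : ℝ) (hg : 0 < g) (hk : 0 < k) (hσ : 0 < σ)
    (θU θS δ e : ℝ) (hθU : 0 < θU) (hθS : 0 < θS) (hδ : 0 ≤ δ) (he : 0 < e) :
    ∀ P : ℝ, 0 < P →
      Ψ ((sstar - g * P + k * H₂ P) / σ) < Ψ ((sstar - g * P + k * H₁ P) / σ) ∧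
      θU * Ψ ((sstar - g * P + k * H₂ P) / σ) * P ^ (-e) +
          (θS * Ψ ((sstar - g * P + k * H₂ P) / σ) - δ) * P⁻¹
        < θU * Ψ ((sstar - g * P + k * H₁ P) / σ) * P ^ (-e) +
            (θS * Ψ ((sstar - g * P + k * H₁ P) / σ) - δ) * P⁻¹ :=
  halving_lowers_safety_and_demand_general φ hφm hφ0 Φ B₁ B₂ hB H₁ H₂ hH₁ hH₂ Ψ hΨm g k σ sstar hk
    hσ θU θS δ e hθU hθS
end
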